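/- Let φ(z) = max{ Σ_{k=2}^∞ α_k log(|z₁|+|z₂-1/k|^{β_k}), λ log|z₃| } on a neighborhood of 0 in ℂ³, with α_k = 2^{-k!}, β_k = 3·2^{k!}, λ > 6. Then for every k ≥ 2 with the point p_k = (0, 1/k, 0) in the domain, and every α > 1, the function 1/(|z₁|²(-log|z₁|)^α) · e^{-φ} is not Lebesgue-integrable on any neighborhood of p_k. -/

import Mathlib

/-!
Near `p_k` every term of the series other than the `k`-th is `≤ 0`, so
`φ ≤ max {α_k log (|z₁| + |z₂ - 1/k|^{β_k}), λ log |z₃|}`. On the region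
`t < |z₁| ≤ 2t, |z₂ - 1/k| ≤ t^{1/β_k}, |z₃| ≤ t^{α_k/λ}` this gives `e^{-φ} ≥ (3t)^{-α_k}`,
the weight is at least `1/(4t² (-log t)^α)`, and the volume is a constant times
`t^{2 + 2/β_k + 2α_k/λ}`. So the integral over any neighbourhood of `p_k` is at least a constant
times `t^{-γ}/(-log t)^α` with `γ = α_k - 2/β_k - 2α_k/λ = α_k (1/3 - 2/λ) > 0`, which is
unbounded as `t → 0⁺`.
-/

open MeasureTheory Complex Real Filter

noncomputable section

/-- `log` with values in `EReal`, with `log x = -∞` for `x ≤ 0`. -/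
def eLog (x : ℝ) : EReal := if x ≤ 0 then ⊥ else ((Real.log x : ℝ) : EReal)

/-- `α_k = 2^{-k!}`. -/
def al (k : ℕ) : ℝ := ((2 : ℝ) ^ (Nat.factorial k))⁻¹

/-- `β_k = 3 · 2^{k!}`. -/
def be (k : ℕ) : ℝ := 3 * (2 : ℝ) ^ (Nat.factorial k)

/-- `φ(z) = max{Σ_{k≥2} α_k log(|z₁|+|z₂-1/k|^{β_k}), λ log|z₃|}` on `ℂ³`. -/
def phi3 (lam : ℝ) (z : Fin 3 → ℂ) : EReal :=
  max (∑' k : ℕ, ((al (k + 2) : ℝ) : EReal) *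
      eLog (‖z 0‖ + ‖z 1 - 1 / ((k : ℂ) + 2)‖ ^ be (k + 2)))
    (((lam : ℝ) : EReal) * eLog ‖z 2‖)

/-- The point `p_k = (0, 1/k, 0) ∈ ℂ³`. -/
def pk (k : ℕ) : Fin 3 → ℂ := ![0, 1 / (k : ℂ), 0]

open Topology Metric

lemma eLog_of_pos {x : ℝ} (hx : 0 < x) : eLog x = Real.log x := if_neg hx.not_ge

lemma coe_mul_eLog_le {c x y : ℝ} (hc : 0 ≤ c) (hxy : x ≤ y) :
    (c : EReal) * eLog x ≤ (c * Real.log y : ℝ) := by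
  rcases le_or_gt x 0 with hx | hx
  · rcases hc.eq_or_lt with rfl | hc
    · simp
    · rw [eLog, if_pos hx, EReal.coe_mul_bot_of_pos hc]
      exact bot_le
  · rw [eLog_of_pos hx, ← EReal.coe_mul, EReal.coe_le_coe_iff]
    exact mul_le_mul_of_nonneg_left (Real.log_le_log hx hxy) hc

lemma EReal.coe_tsum {ι : Type*} {f : ι → ℝ} (hf : Summable f) :
    ((∑' i, f i : ℝ) : EReal) = ∑' i, (f i : EReal) :=
  hf.map_tsum (⟨⟨(↑), EReal.coe_zero⟩, EReal.coe_add⟩ : ℝ →+ EReal) continuous_coe_real_ereal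

lemma Summable.tsum_le_of_nonpos {ι : Type*} {f : ι → ℝ} (hf : Summable f) (h : ∀ j, f j ≤ 0)
    (i : ι) : ∑' j, f j ≤ f i := by
  have := hf.neg.le_tsum i fun j _ => neg_nonneg.2 (h j)
  rwa [tsum_neg, neg_le_neg_iff] at this

lemma al_pos (k : ℕ) : 0 < al k := by unfold al; positivity

lemma one_le_be (k : ℕ) : 1 ≤ be k := by
  unfold be
  nlinarith [one_le_pow₀ (M₀ := ℝ) (n := k.factorial) one_le_two]

lemma be_pos (k : ℕ) : 0 < be k := by unfold be; positivity

lemma al_mul_be (k : ℕ) : al k * be k = 3 := by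
  unfold al be
  field_simp

lemma summable_al : Summable al := by
  refine Summable.of_nonneg_of_le (fun n => (al_pos n).le) (fun n => ?_) summable_geometric_two
  rw [al, one_div, inv_pow]
  exact inv_anti₀ (by positivity) (pow_le_pow_right₀ one_le_two (Nat.self_le_factorial n))

lemma al_sub_two_div_be_sub_pos (k : ℕ) {lam : ℝ} (hlam : 6 < lam) :
    0 < al k - 2 / be k - 2 * al k / lam := by
  have hbe : be k = 3 / al k := by
    rw [← al_mul_be k, mul_div_cancel_left₀ _ (al_pos k).ne']
  have : al k - 2 / be k - 2 * al k / lam = al k * (lam - 6) / (3 * lam) := by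
    rw [hbe]
    field_simp
    ring
  rw [this]
  have ha := al_pos k
  have hl : 0 < lam - 6 := sub_pos.2 hlam
  positivity

lemma norm_sub_one_div_add_two_le {m : ℕ} {w : ℂ} (hw : ‖w - 1 / ((m : ℂ) + 2)‖ ≤ 1 / 4)
    (j : ℕ) : ‖w - 1 / ((j : ℂ) + 2)‖ ≤ 3 / 4 := by
  have mem_Icc : ∀ n : ℕ, 0 ≤ 1 / ((n : ℝ) + 2) ∧ 1 / ((n : ℝ) + 2) ≤ 1 / 2 := fun n =>
    ⟨by positivity, one_div_le_one_div_of_le two_pos (by linarith [n.cast_nonneg (α := ℝ)])⟩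
  have hmj : ‖1 / ((m : ℂ) + 2) - 1 / ((j : ℂ) + 2)‖ ≤ 1 / 2 := by
    have : 1 / ((m : ℂ) + 2) - 1 / ((j : ℂ) + 2) =
        ((1 / ((m : ℝ) + 2) - 1 / ((j : ℝ) + 2) : ℝ) : ℂ) := by
      push_cast
      ring
    rw [this, Complex.norm_real, Real.norm_eq_abs]
    exact abs_sub_le_of_nonneg_of_le (mem_Icc m).1 (mem_Icc m).2 (mem_Icc j).1 (mem_Icc j).2
  linarith [norm_sub_le_norm_sub_add_norm_sub w (1 / ((m : ℂ) + 2)) (1 / ((j : ℂ) + 2))]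

lemma phi3_le_max (lam : ℝ) {k : ℕ} (hk : 2 ≤ k) {z : Fin 3 → ℂ} (hz0 : 0 < ‖z 0‖)
    (hz : z ∈ ball (pk k) (1 / 4)) :
    phi3 lam z ≤ max ((al k : EReal) * eLog (‖z 0‖ + ‖z 1 - 1 / (k : ℂ)‖ ^ be k))
      ((lam : EReal) * eLog ‖z 2‖) := by
  refine max_le_max ?_ le_rfl
  obtain ⟨m, rfl⟩ := Nat.exists_eq_add_of_le' hk
  have hnear : ∀ i, ‖z i - pk (m + 2) i‖ < 1 / 4 := fun i => by
    simpa only [dist_eq_norm] using (dist_le_pi_dist z _ i).trans_lt hz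
  have hz0' : ‖z 0‖ < 1 / 4 := by simpa [pk] using hnear 0
  have hz1 : ‖z 1 - 1 / ((m : ℂ) + 2)‖ ≤ 1 / 4 := by
    simpa [pk] using (hnear 1).le
  set x := ‖z 0‖
  set t : ℕ → ℝ := fun j => al (j + 2) * Real.log (x + ‖z 1 - 1 / ((j : ℂ) + 2)‖ ^ be (j + 2))
  have harg_pos : ∀ j : ℕ, 0 < x + ‖z 1 - 1 / ((j : ℂ) + 2)‖ ^ be (j + 2) := fun j => by positivity
  have harg_le : ∀ j : ℕ, x + ‖z 1 - 1 / ((j : ℂ) + 2)‖ ^ be (j + 2) ≤ 1 := fun j => by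
    have := norm_sub_one_div_add_two_le hz1 j
    have := Real.rpow_le_self_of_le_one (norm_nonneg _) (by linarith) (one_le_be (j + 2))
    linarith
  have ht_nonpos : ∀ j, t j ≤ 0 := fun j =>
    mul_nonpos_of_nonneg_of_nonpos (al_pos _).le (Real.log_nonpos (harg_pos j).le (harg_le j))
  have ht_summable : Summable t := by
    refine Summable.of_norm_bounded (((summable_nat_add_iff 2).2 summable_al).mul_right
      (-Real.log x)) fun j => ?_
    have hlog : Real.log x ≤ Real.log (x + ‖z 1 - 1 / ((j : ℂ) + 2)‖ ^ be (j + 2)) :=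
      Real.log_le_log hz0 (le_add_of_nonneg_right (by positivity))
    rw [Real.norm_eq_abs, abs_of_nonpos (ht_nonpos j), ← mul_neg]
    exact mul_le_mul_of_nonneg_left (neg_le_neg hlog) (al_pos _).le
  calc ∑' j : ℕ, ((al (j + 2) : ℝ) : EReal) * eLog (x + ‖z 1 - 1 / ((j : ℂ) + 2)‖ ^ be (j + 2))
      = ∑' j, (t j : EReal) :=
        tsum_congr fun j => by rw [eLog_of_pos (harg_pos j), ← EReal.coe_mul]
    _ = (∑' j, t j : ℝ) := (EReal.coe_tsum ht_summable).symm
    _ ≤ t m := EReal.coe_le_coe_iff.2 (ht_summable.tsum_le_of_nonpos ht_nonpos m)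
    _ = _ := by
      rw [eLog_of_pos (by simpa using harg_pos m), ← EReal.coe_mul]
      push_cast
      rfl

def annularPolydisc (c : ℂ) (t ρ σ : ℝ) : Set (Fin 3 → ℂ) :=
  Set.univ.pi ![closedBall 0 (2 * t) \ closedBall 0 t, closedBall c ρ, closedBall 0 σ]

lemma mem_annularPolydisc {c : ℂ} {t ρ σ : ℝ} {z : Fin 3 → ℂ} :
    z ∈ annularPolydisc c t ρ σ ↔
      (t < ‖z 0‖ ∧ ‖z 0‖ ≤ 2 * t) ∧ ‖z 1 - c‖ ≤ ρ ∧ ‖z 2‖ ≤ σ := by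
  simp [annularPolydisc, Fin.forall_fin_succ, dist_eq_norm, and_comm]

lemma measurableSet_annularPolydisc (c : ℂ) (t ρ σ : ℝ) :
    MeasurableSet (annularPolydisc c t ρ σ) :=
  MeasurableSet.univ_pi fun i => by
    fin_cases i
    exacts [measurableSet_closedBall.diff measurableSet_closedBall, measurableSet_closedBall,
      measurableSet_closedBall]

lemma volume_annularPolydisc (c : ℂ) {t ρ σ : ℝ} (ht : 0 ≤ t) (hρ : 0 ≤ ρ) (hσ : 0 ≤ σ) :
    volume (annularPolydisc c t ρ σ) =
      ENNReal.ofReal (3 * π * t ^ 2 * (π * ρ ^ 2) * (π * σ ^ 2)) := by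
  have hpi : ((NNReal.pi : NNReal) : ENNReal) = ENNReal.ofReal π := by
    rw [← NNReal.coe_real_pi, ENNReal.ofReal_coe_nnreal]
  have hannulus : volume (closedBall (0 : ℂ) (2 * t) \ closedBall 0 t) =
      ENNReal.ofReal (3 * π * t ^ 2) := by
    rw [measure_sdiff (closedBall_subset_closedBall (by linarith))
      measurableSet_closedBall.nullMeasurableSet measure_closedBall_lt_top.ne,
      Complex.volume_closedBall, Complex.volume_closedBall, hpi, ← ENNReal.ofReal_pow ht,
      ← ENNReal.ofReal_pow (by positivity), ← ENNReal.ofReal_mul (by positivity),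
      ← ENNReal.ofReal_mul (by positivity), ← ENNReal.ofReal_sub _ (by positivity)]
    ring_nf
  rw [annularPolydisc, volume_pi_pi, Fin.prod_univ_three]
  simp only [Matrix.cons_val_zero, Matrix.cons_val_one, Matrix.cons_val_two, Matrix.head_cons,
    Matrix.tail_cons]
  rw [hannulus, Complex.volume_closedBall, Complex.volume_closedBall, hpi,
    ← ENNReal.ofReal_pow hρ, ← ENNReal.ofReal_pow hσ, ← ENNReal.ofReal_mul (by positivity),
    ← ENNReal.ofReal_mul (by positivity), ← ENNReal.ofReal_mul (by positivity),
    ← ENNReal.ofReal_mul (by positivity)]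
  ring_nf

lemma annularPolydisc_subset_ball {c : ℂ} {t ρ σ ε : ℝ} (ht : 2 * t < ε) (hρ : ρ < ε)
    (hσ : σ < ε) : annularPolydisc c t ρ σ ⊆ ball ![0, c, 0] ε := by
  intro z hz
  obtain ⟨⟨-, hz0⟩, hz1, hz2⟩ := mem_annularPolydisc.1 hz
  rw [mem_ball, dist_pi_lt_iff (by linarith [norm_nonneg (z 0)])]
  intro i
  fin_cases i <;> simp [dist_eq_norm] <;> linarith

lemma eventually_annularPolydisc_subset_ball (c : ℂ) {p q ε : ℝ} (hp : 0 < p) (hq : 0 < q)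
    (hε : 0 < ε) : ∀ᶠ t in 𝓝[>] 0, annularPolydisc c t (t ^ p) (t ^ q) ⊆ ball ![0, c, 0] ε := by
  have hlim : ∀ r : ℝ, 0 < r → Tendsto (fun t : ℝ => t ^ r) (𝓝[>] 0) (𝓝 0) := fun r hr => by
    simpa [Real.zero_rpow hr.ne'] using
      (Real.continuousAt_rpow_const 0 r (Or.inr hr.le)).tendsto.mono_left nhdsWithin_le_nhds
  have h2t : Tendsto (fun t : ℝ => 2 * t) (𝓝[>] 0) (𝓝 0) := by
    simpa using ((continuous_const_mul (2 : ℝ)).tendsto 0).mono_left nhdsWithin_le_nhds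
  filter_upwards [h2t.eventually (gt_mem_nhds hε), (hlim p hp).eventually (gt_mem_nhds hε),
    (hlim q hq).eventually (gt_mem_nhds hε)] with t ht hρ hσ
  exact annularPolydisc_subset_ball ht hρ hσ

section NearPk

variable {lam t : ℝ} {k : ℕ} {z : Fin 3 → ℂ}

lemma phi3_le_of_mem_annularPolydisc (hk : 2 ≤ k) (hlam : 0 < lam) (ht : 0 < t)
    (hz : z ∈ annularPolydisc (1 / k) t (t ^ (1 / be k)) (t ^ (al k / lam)))
    (hz' : z ∈ ball (pk k) (1 / 4)) :
    phi3 lam z ≤ (al k * Real.log (3 * t) : ℝ) := by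
  obtain ⟨⟨hxt, hx2t⟩, hz1, hz2⟩ := mem_annularPolydisc.1 hz
  have hbe := be_pos k
  have hz1' : ‖z 1 - 1 / k‖ ^ be k ≤ t :=
    calc ‖z 1 - 1 / k‖ ^ be k ≤ (t ^ (1 / be k)) ^ be k :=
          Real.rpow_le_rpow (norm_nonneg _) hz1 hbe.le
      _ = t := by rw [← Real.rpow_mul ht.le, one_div_mul_cancel hbe.ne', Real.rpow_one]
  refine (phi3_le_max lam hk (ht.trans hxt) hz').trans (max_le ?_ ?_)
  · exact coe_mul_eLog_le (al_pos k).le (by linarith)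
  · calc (lam : EReal) * eLog ‖z 2‖ ≤ (lam * Real.log (t ^ (al k / lam)) : ℝ) :=
          coe_mul_eLog_le hlam.le hz2
      _ ≤ (al k * Real.log (3 * t) : ℝ) := by
        rw [EReal.coe_le_coe_iff, Real.log_rpow ht, ← mul_assoc, mul_div_cancel₀ _ hlam.ne']
        exact mul_le_mul_of_nonneg_left (Real.log_le_log ht (by linarith)) (al_pos k).le

lemma ofReal_le_integrand_of_mem_annularPolydisc (hk : 2 ≤ k) (hlam : 0 < lam) (ht : 0 < t)
    {α : ℝ} (hα : 0 ≤ α)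
    (hz : z ∈ annularPolydisc (1 / k) t (t ^ (1 / be k)) (t ^ (al k / lam)))
    (hz' : z ∈ ball (pk k) (1 / 4)) :
    ENNReal.ofReal ((3 * t) ^ (-al k) * (1 / ((2 * t) ^ 2 * (-Real.log t) ^ α))) ≤
      EReal.exp (-(phi3 lam z)) * ENNReal.ofReal (1 / (‖z 0‖ ^ 2 * (-Real.log ‖z 0‖) ^ α)) := by
  obtain ⟨⟨hxt, hx2t⟩, -⟩ := mem_annularPolydisc.1 hz
  have hx1 : ‖z 0‖ < 1 := by
    have := (dist_le_pi_dist z (pk k) 0).trans_lt hz'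
    simp [pk, dist_eq_norm] at this
    linarith
  have hlogx : 0 < -Real.log ‖z 0‖ := neg_pos.2 (Real.log_neg (ht.trans hxt) hx1)
  rw [ENNReal.ofReal_mul (by positivity)]
  refine mul_le_mul' ?_ (ENNReal.ofReal_le_ofReal ?_)
  · have hφ : ((-(al k * Real.log (3 * t)) : ℝ) : EReal) ≤ -phi3 lam z := by
      rw [EReal.coe_neg]
      exact EReal.neg_le_neg_iff.2 (phi3_le_of_mem_annularPolydisc hk hlam ht hz hz')
    calc ENNReal.ofReal ((3 * t) ^ (-al k))
        = EReal.exp ((-(al k * Real.log (3 * t)) : ℝ) : EReal) := by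
          rw [EReal.exp_coe, Real.rpow_def_of_pos (by positivity)]
          ring_nf
      _ ≤ EReal.exp (-(phi3 lam z)) := EReal.exp_monotone hφ
  · refine one_div_le_one_div_of_le
      (mul_pos (pow_pos (ht.trans hxt) 2) (Real.rpow_pos_of_pos hlogx α))
      (mul_le_mul ?_ ?_ (by positivity) (by positivity))
    · exact pow_le_pow_left₀ (norm_nonneg _) hx2t 2
    · exact Real.rpow_le_rpow hlogx.le (neg_le_neg (Real.log_le_log ht hxt.le)) hα

end NearPk

lemma mul_volume_annularPolydisc_eq {a b lam t M : ℝ} (ht : 0 < t) :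
    (3 * t) ^ (-a) * (1 / ((2 * t) ^ 2 * M)) *
        (3 * π * t ^ 2 * (π * (t ^ (1 / b)) ^ 2) * (π * (t ^ (a / lam)) ^ 2)) =
      3 * 3 ^ (-a) * π ^ 3 / 4 * (t ^ (-(a - 2 / b - 2 * a / lam)) / M) := by
  have hsq : ∀ r : ℝ, (t ^ r) ^ 2 = t ^ (2 * r) := fun r => by
    rw [← Real.rpow_natCast, ← Real.rpow_mul ht.le, mul_comm]
    norm_num
  have hexp : t ^ (-(a - 2 / b - 2 * a / lam)) =
      t ^ (-a) * t ^ (2 * (1 / b)) * t ^ (2 * (a / lam)) := by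
    rw [← Real.rpow_add ht, ← Real.rpow_add ht]
    ring_nf
  rw [Real.mul_rpow (by norm_num) ht.le, hsq, hsq, hexp]
  field_simp
  ring

lemma tendsto_rpow_neg_div_neg_log_rpow {γ : ℝ} (hγ : 0 < γ) (α : ℝ) :
    Tendsto (fun t => t ^ (-γ) / (-Real.log t) ^ α) (𝓝[>] 0) atTop := by
  refine ((tendsto_exp_mul_div_rpow_atTop α γ hγ).comp
    (tendsto_neg_atBot_atTop.comp tendsto_log_nhdsGT_zero)).congr' ?_
  filter_upwards [self_mem_nhdsWithin] with t (ht : 0 < t)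
  simp only [Function.comp_apply, Real.rpow_def_of_pos ht]
  ring_nf

lemma ofReal_le_setLIntegral_annularPolydisc {lam t α : ℝ} {k : ℕ} (hk : 2 ≤ k) (hlam : 0 < lam)
    (hα : 0 ≤ α) (ht : 0 < t)
    (hsub : annularPolydisc (1 / k) t (t ^ (1 / be k)) (t ^ (al k / lam)) ⊆ ball (pk k) (1 / 4)) :
    ENNReal.ofReal (3 * 3 ^ (-al k) * π ^ 3 / 4 *
        (t ^ (-(al k - 2 / be k - 2 * al k / lam)) / (-Real.log t) ^ α)) ≤
      ∫⁻ z in annularPolydisc (1 / k) t (t ^ (1 / be k)) (t ^ (al k / lam)),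
        EReal.exp (-(phi3 lam z)) * ENNReal.ofReal (1 / (‖z 0‖ ^ 2 * (-Real.log ‖z 0‖) ^ α)) := by
  rw [← mul_volume_annularPolydisc_eq ht, ENNReal.ofReal_mul' (by positivity),
    ← volume_annularPolydisc _ ht.le (by positivity) (by positivity), ← setLIntegral_const]
  exact setLIntegral_mono' (measurableSet_annularPolydisc _ _ _ _) fun z hz =>
    ofReal_le_integrand_of_mem_annularPolydisc hk hlam ht hα hz (hsub hz)

/-- For `λ > 6`, every `k ≥ 2` and every `α > 1`, the function
`e^{-φ}/(|z₁|²(-log|z₁|)^α)` is not Lebesgue-integrable on any neighborhood of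
`p_k = (0, 1/k, 0)`. -/
theorem adjoint_ideal_stmt7 (lam : ℝ) (hlam : 6 < lam) (k : ℕ) (hk : 2 ≤ k)
    (α : ℝ) (hα : 1 < α) (V : Set (Fin 3 → ℂ)) (hV : V ∈ nhds (pk k)) :
    ∫⁻ z in V, EReal.exp (-(phi3 lam z)) *
      ENNReal.ofReal (1 / (‖z 0‖ ^ 2 * (-Real.log ‖z 0‖) ^ α)) = ⊤ := by
  obtain ⟨ε, hε, hεV⟩ := Metric.mem_nhds_iff.1 hV
  have hlam0 : 0 < lam := by linarith
  have hlim := ENNReal.tendsto_ofReal_atTop.comp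
    ((tendsto_rpow_neg_div_neg_log_rpow (al_sub_two_div_be_sub_pos k hlam) α).const_mul_atTop
      (by positivity : (0 : ℝ) < 3 * 3 ^ (-al k) * π ^ 3 / 4))
  refine top_unique (le_of_tendsto hlim ?_)
  filter_upwards [eventually_annularPolydisc_subset_ball (1 / (k : ℂ)) (one_div_pos.2 (be_pos k))
    (div_pos (al_pos k) hlam0) (lt_min hε (by norm_num : (0 : ℝ) < 1 / 4)),
    self_mem_nhdsWithin] with t hsub (ht : 0 < t)
  calc _ ≤ _ := ofReal_le_setLIntegral_annularPolydisc hk hlam0 (by linarith) ht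
        (hsub.trans (ball_subset_ball (min_le_right _ _)))
    _ ≤ _ := lintegral_mono_set (hsub.trans ((ball_subset_ball (min_le_left _ _)).trans hεV))
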